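/- Let G be a multigraph with χ'(G) = k ≥ Δ(G) and let H be a k-dense subgraph of G. Let ψ be a k-edge-coloring of H and φ a k-edge-coloring of G−E(H) such that the colors on the edges of the boundary ∂_G(H) are pairwise distinct under φ. Then by renaming the color classes of ψ on E(H), one can obtain a proper k-edge-coloring of G that agrees with φ on E(G)∖E(H) and whose restriction to E(H) is the modified coloring based on ψ. -/

import Mathlib

/-- A finite multigraph: finite vertex and edge types, each edge has an unordered pair of
endvertices, and there are no loops. -/
structure Multigraph where
  V : Type
  E : Type
  [fintypeV : Fintype V]
  [fintypeE : Fintype E]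
  ends : E → Sym2 V
  loopless : ∀ e, ¬ (ends e).IsDiag

attribute [instance] Multigraph.fintypeV Multigraph.fintypeE

namespace Multigraph

section Basic

variable (G : Multigraph)

/-- The degree of a vertex: the number of edges incident with it. -/
noncomputable def degree (v : G.V) : ℕ := {e : G.E | v ∈ G.ends e}.ncard

/-- The maximum degree Δ(G). -/
noncomputable def maxDegree : ℕ := sSup (Set.range G.degree)

/-- The number of edges joining `x` and `y` (the multiplicity e_G(x,y)). -/
noncomputable def mult (x y : G.V) : ℕ := {e : G.E | G.ends e = s(x, y)}.ncard

/-- The maximum multiplicity μ(G). -/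
noncomputable def maxMult : ℕ := sSup {m : ℕ | ∃ x y : G.V, G.mult x y = m}

/-- `c` is a proper edge coloring, with palette `{1,…,k}`, of the edges in `D`
(edges sharing an endvertex get distinct colors). -/
def IsProperColoringOn (k : ℕ) (D : Set G.E) (c : G.E → ℕ) : Prop :=
  (∀ e ∈ D, c e ∈ Set.Icc 1 k) ∧
  ∀ e ∈ D, ∀ f ∈ D, e ≠ f → (∃ v, v ∈ G.ends e ∧ v ∈ G.ends f) → c e ≠ c f

/-- A proper `k`-edge-coloring of all of `G`. -/
def IsProperColoring (k : ℕ) (c : G.E → ℕ) : Prop := G.IsProperColoringOn k Set.univ c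

/-- The chromatic index of the subgraph of `G` consisting of the edges in `D`
(vertices are irrelevant for edge colorings). -/
noncomputable def chromIndexOn (D : Set G.E) : ℕ := sInf {k | ∃ c, G.IsProperColoringOn k D c}

/-- The chromatic index χ'(G). -/
noncomputable def chromIndex : ℕ := G.chromIndexOn Set.univ

/-- The set of colors of the palette `{1,…,k}` missing at `v`, where only the edges in `D`
are regarded as colored. -/
def missingOn (k : ℕ) (D : Set G.E) (c : G.E → ℕ) (v : G.V) : Set ℕ :=
  {i | i ∈ Set.Icc 1 k ∧ ∀ e ∈ D, v ∈ G.ends e → c e ≠ i}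

/-- `X` is elementary: missing-color sets of distinct vertices of `X` are disjoint. -/
def IsElementaryOn (k : ℕ) (D : Set G.E) (c : G.E → ℕ) (X : Set G.V) : Prop :=
  ∀ u ∈ X, ∀ v ∈ X, u ≠ v → G.missingOn k D c u ∩ G.missingOn k D c v = ∅

/-- The boundary ∂_G(X): edges with an endvertex in `X` and an endvertex outside `X`. -/
def boundary (X : Set G.V) : Set G.E :=
  {e | (∃ v ∈ G.ends e, v ∈ X) ∧ (∃ v ∈ G.ends e, v ∉ X)}

/-- `X` is strongly closed (w.r.t. the coloring `c` of the edges in `D`): every color on a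
boundary edge of `X` is present at every vertex of `X`, and the colors on the boundary edges
are pairwise distinct. -/
def IsStronglyClosedOn (D : Set G.E) (c : G.E → ℕ) (X : Set G.V) : Prop :=
  (∀ e ∈ G.boundary X ∩ D, ∀ v ∈ X, ∃ f ∈ D, v ∈ G.ends f ∧ c f = c e) ∧
  ∀ e ∈ G.boundary X ∩ D, ∀ f ∈ G.boundary X ∩ D, e ≠ f → c e ≠ c f

end Basic

/-- A subgraph of `G`: a set of vertices together with a set of edges all of whose
endvertices belong to the vertex set. -/
structure Subgraph (G : Multigraph) where
  verts : Set G.V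
  edges : Set G.E
  support : ∀ e ∈ edges, ∀ v, v ∈ G.ends e → v ∈ verts

section Sub

variable (G : Multigraph)

/-- The whole graph, as a subgraph of itself. -/
def top : G.Subgraph := ⟨Set.univ, Set.univ, fun _ _ _ _ => Set.mem_univ _⟩

/-- `H` is a `k`-dense subgraph: it has an odd number of vertices and
`|E(H)| = (|V(H)|-1)·k/2`. -/
def IsDense (k : ℕ) (H : G.Subgraph) : Prop :=
  Odd H.verts.ncard ∧ 2 * H.edges.ncard = (H.verts.ncard - 1) * k

/-- `H` is a `k`-dense subgraph of `G - F` (the graph obtained by deleting the edges of `F`). -/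
def IsDenseIn (F : Set G.E) (k : ℕ) (H : G.Subgraph) : Prop :=
  H.edges ∩ F = ∅ ∧ G.IsDense k H

/-- `H` is a maximal `k`-dense subgraph of `G - F`. -/
def IsMaximalDenseIn (F : Set G.E) (k : ℕ) (H : G.Subgraph) : Prop :=
  G.IsDenseIn F k H ∧
  ∀ H' : G.Subgraph, G.IsDenseIn F k H' → H.verts ⊆ H'.verts → H.edges ⊆ H'.edges →
    H.verts = H'.verts ∧ H.edges = H'.edges

/-- The density Γ(H) of a subgraph `H` of `G`:
`max { 2|E(H')|/(|V(H')|-1) : H' ⊆ H, |V(H')| ≥ 3 odd }` (and `0` if there is no such `H'`,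
since in `ℝ` the supremum of the empty set is `0`). -/
noncomputable def densityOf (H : G.Subgraph) : ℝ :=
  sSup {x : ℝ | ∃ H' : G.Subgraph, H'.verts ⊆ H.verts ∧ H'.edges ⊆ H.edges ∧
    3 ≤ H'.verts.ncard ∧ Odd H'.verts.ncard ∧
    x = 2 * (H'.edges.ncard : ℝ) / ((H'.verts.ncard : ℝ) - 1)}

/-- The density Γ(G). -/
noncomputable def density : ℝ := G.densityOf G.top

/-- `e` is a `k`-critical edge of `G`: `χ'(G-e) = k < χ'(G) = k+1`. -/
def IsCriticalEdge (k : ℕ) (e : G.E) : Prop :=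
  G.chromIndexOn {e}ᶜ = k ∧ G.chromIndex = k + 1

/-- Degree of `v` in the subgraph consisting of the edges in `D`. -/
noncomputable def degreeOn (D : Set G.E) (v : G.V) : ℕ := {e : G.E | e ∈ D ∧ v ∈ G.ends e}.ncard

/-- Maximum degree of the subgraph consisting of the edges in `D`. -/
noncomputable def maxDegreeOn (D : Set G.E) : ℕ := sSup (Set.range (G.degreeOn D))

/-- Multiplicity of the pair `x,y` in the subgraph consisting of the edges in `D`. -/
noncomputable def multOn (D : Set G.E) (x y : G.V) : ℕ :=
  {e : G.E | e ∈ D ∧ G.ends e = s(x, y)}.ncard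

/-- Maximum multiplicity of the subgraph consisting of the edges in `D`. -/
noncomputable def maxMultOn (D : Set G.E) : ℕ := sSup {m : ℕ | ∃ x y : G.V, G.multOn D x y = m}

/-- The simple graph underlying the subgraph of `G` with edge set `D`. -/
def simpleOn (D : Set G.E) : SimpleGraph G.V where
  Adj a b := a ≠ b ∧ ∃ e ∈ D, G.ends e = s(a, b)
  symm := by
    constructor
    rintro a b ⟨hab, e, he, hh⟩
    exact ⟨hab.symm, e, he, hh.trans Sym2.eq_swap⟩
  loopless := by constructor; rintro a ⟨h, -⟩; exact h rfl

/-- The diameter (in `ℕ∞`) of the subgraph with vertex set `S` and edge set `D`: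
the greatest distance between a pair of its vertices. -/
noncomputable def diamOn (S : Set G.V) (D : Set G.E) : ℕ∞ :=
  sSup {d : ℕ∞ | ∃ u ∈ S, ∃ v ∈ S, (G.simpleOn D).edist u v = d}

/-- The distance (in `ℕ∞`) between two edges of `G`: the length of a shortest path connecting
an endvertex of `e` and an endvertex of `f`. -/
noncomputable def edgeDist (e f : G.E) : ℕ∞ :=
  sInf {d : ℕ∞ | ∃ u v : G.V, u ∈ G.ends e ∧ v ∈ G.ends f ∧
    (G.simpleOn Set.univ).edist u v = d}

/-- A matching: a set of edges no two of which share an endvertex. -/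
def IsMatching (M : Set G.E) : Prop :=
  ∀ e ∈ M, ∀ f ∈ M, e ≠ f → ∀ v : G.V, v ∈ G.ends e → v ∉ G.ends f

/-- An edge `e ∈ E_G(x,y)` is fully `G`-saturated if `d_G(x) = d_G(y) = Δ(G)` and
`e_G(x,y) = μ(G)`. -/
def IsFullySaturated (e : G.E) : Prop :=
  ∃ x y : G.V, G.ends e = s(x, y) ∧ G.degree x = G.maxDegree ∧ G.degree y = G.maxDegree ∧
    G.mult x y = G.maxMult

/-- One step along a Kempe `(α,β)`-chain: an edge of `D` colored `α` or `β` joining the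
two vertices. -/
def chainStep (D : Set G.E) (c : G.E → ℕ) (α β : ℕ) (a b : G.V) : Prop :=
  ∃ e ∈ D, G.ends e = s(a, b) ∧ (c e = α ∨ c e = β)

/-- `u` and `v` lie on the same `(α,β)`-chain, i.e. `P_u(α,β) = P_v(α,β)`. -/
def sameChain (D : Set G.E) (c : G.E → ℕ) (α β : ℕ) (u v : G.V) : Prop :=
  Relation.ReflTransGen (G.chainStep D c α β) u v

end Sub

/-- The Goldberg–Seymour theorem (proved by Chen, Jing and Zang), as a hypothesis:
every multigraph `G'` with `χ'(G') ≥ Δ(G')+2` satisfies `χ'(G') = ⌈Γ(G')⌉`. -/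
def GoldbergSeymour : Prop :=
  ∀ G' : Multigraph, G'.maxDegree + 2 ≤ G'.chromIndex → (G'.chromIndex : ℤ) = ⌈G'.density⌉

/-- A (general) multi-fan at `x` with respect to the edge `e₀ ∈ E_G(x,y₀)` and the coloring
`c` of the edges in `D` with palette `{1,…,k}`: a sequence `(x, e₀, y₀, e₁, y₁, …, e_p, y_p)`
of vertices and pairwise distinct edges with `e_i ∈ E_G(x, y_i)` and, for `i ≥ 1`,
`c(e_i)` missing at `y_j` for some `j < i`. -/
structure MultiFan (G : Multigraph) (k : ℕ) (D : Set G.E) (c : G.E → ℕ)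
    (x : G.V) (e₀ : G.E) (y₀ : G.V) where
  p : ℕ
  edge : Fin (p + 1) → G.E
  vx : Fin (p + 1) → G.V
  edge_zero : edge 0 = e₀
  vx_zero : vx 0 = y₀
  ends_eq : ∀ i, G.ends (edge i) = s(x, vx i)
  edge_inj : Function.Injective edge
  fan_cond : ∀ i : Fin (p + 1), i ≠ 0 →
    ∃ j : Fin (p + 1), j < i ∧ c (edge i) ∈ G.missingOn k D c (vx j)

namespace MultiFan

variable {G : Multigraph} {k : ℕ} {D : Set G.E} {c : G.E → ℕ} {x : G.V} {e₀ : G.E} {y₀ : G.V}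

/-- The vertex set `V(F)` of a multi-fan. -/
def verts (F : MultiFan G k D c x e₀ y₀) : Set G.V := insert x (Set.range F.vx)

/-- `F` is a subsequence of `F'`. -/
def Subseq (F F' : MultiFan G k D c x e₀ y₀) : Prop :=
  ∃ ι : Fin (F.p + 1) → Fin (F'.p + 1), StrictMono ι ∧
    ∀ i, F'.edge (ι i) = F.edge i ∧ F'.vx (ι i) = F.vx i

/-- `F` is a maximal multi-fan: no multi-fan contains it as a proper subsequence. -/
def IsMaximal (F : MultiFan G k D c x e₀ y₀) : Prop :=
  ∀ F' : MultiFan G k D c x e₀ y₀, F.Subseq F' → F'.p = F.p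

/-- `F` contains no `i`-edge. -/
def NoColor (F : MultiFan G k D c x e₀ y₀) (i : ℕ) : Prop :=
  ∀ j, F.edge j ∈ D → c (F.edge j) ≠ i

/-- `F` is a multi-fan without `i`-edges that is maximal among such. -/
def IsMaximalWithout (F : MultiFan G k D c x e₀ y₀) (i : ℕ) : Prop :=
  F.NoColor i ∧
  ∀ F' : MultiFan G k D c x e₀ y₀, F'.NoColor i → F.Subseq F' → F'.p = F.p

/-- `e_F(x,z)`: the number of edges of the multi-fan `F` joining `x` and `z`. -/
noncomputable def multAt (F : MultiFan G k D c x e₀ y₀) (z : G.V) : ℕ :=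
  Nat.card {j : Fin (F.p + 1) // F.vx j = z}

end MultiFan

end Multigraph

/-! Since `χ'(G) = k`, each color class of a `k`-edge-coloring of `G` has at most
`(|V(H)| - 1)/2` edges inside `V(H)`; as `H` is `k`-dense, `H` is therefore an induced subgraph,
and every color class of `ψ` is a matching of `H` missing exactly one vertex of `H`. So the sets
of colors missing under `ψ` at distinct vertices of `H` are disjoint, and, because `Δ(G) ≤ k`,
each vertex of `H` has at least as many missing colors as boundary edges. Assign to every
boundary edge a distinct color missing at its end in `H`, and rename the colors of `ψ` so that
this color becomes the `φ`-color of the edge: an edge of `H` and a boundary edge meeting it at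
`v` then get different colors, since the `ψ`-color renamed to the color of the boundary edge
is missing at `v`. -/

theorem Set.exists_injOn_biUnion_of_encard_le {ι α β : Type*} [Nonempty β] {I : Set ι}
    {B : ι → Set α} {M : ι → Set β} (hB : I.PairwiseDisjoint B) (hM : I.PairwiseDisjoint M)
    (hfin : ∀ i ∈ I, (B i).Finite) (hle : ∀ i ∈ I, (B i).encard ≤ (M i).encard) :
    ∃ F : α → β, Set.InjOn F (⋃ i ∈ I, B i) ∧ ∀ i ∈ I, Set.MapsTo F (B i) (M i) := by
  classical
  have hloc : ∀ i ∈ I, ∃ F : α → β, B i ⊆ F ⁻¹' M i ∧ Set.InjOn F (B i) :=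
    fun i hi => (hfin i hi).exists_injOn_of_encard_le (hle i hi)
  choose! F hFM hFinj using hloc
  let Φ : α → β := fun a =>
    if h : ∃ i ∈ I, a ∈ B i then F h.choose a else Classical.arbitrary β
  have hΦ : ∀ i ∈ I, ∀ a ∈ B i, Φ a = F i a := by
    intro i hi a ha
    have h : ∃ i ∈ I, a ∈ B i := ⟨i, hi, ha⟩
    have hchoose : h.choose = i := by
      by_contra hne
      exact Set.disjoint_left.1 (hB h.choose_spec.1 hi hne) h.choose_spec.2 ha
    simp only [Φ, dif_pos h, hchoose]
  have hmaps : ∀ i ∈ I, Set.MapsTo Φ (B i) (M i) := fun i hi a ha => by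
    rw [hΦ i hi a ha]
    exact hFM i hi ha
  refine ⟨Φ, ?_, hmaps⟩
  intro a ha a' ha' heq
  obtain ⟨i, hi, ha⟩ := Set.mem_iUnion₂.1 ha
  obtain ⟨j, hj, ha'⟩ := Set.mem_iUnion₂.1 ha'
  obtain rfl : i = j := by
    by_contra hne
    exact Set.disjoint_left.1 (hM hi hj hne) (hmaps i hi ha) (heq ▸ hmaps j hj ha')
  rw [hΦ i hi a ha, hΦ i hi a' ha'] at heq
  exact hFinj i hi ha ha' heq

theorem Set.InjOn.exists_perm_mapsTo {α β : Type*} {s : Set α} {t : Set β} (hs : s.Finite)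
    {f g : α → β} (hf : Set.InjOn f s) (hg : Set.InjOn g s) (hft : Set.MapsTo f s t)
    (hgt : Set.MapsTo g s t) :
    ∃ π : Equiv.Perm β, Set.MapsTo π t t ∧ ∀ a ∈ s, π (f a) = g a := by
  classical
  have := hs.to_subtype
  obtain ⟨σ, hσ⟩ := Equiv.Perm.exists_extending_pair (fun a : s => (⟨f a, hft a.2⟩ : t))
    (fun a => ⟨g a, hgt a.2⟩) (fun a b h => Subtype.ext (hf a.2 b.2 (congrArg Subtype.val h)))
    (fun a b h => Subtype.ext (hg a.2 b.2 (congrArg Subtype.val h)))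
  refine ⟨Equiv.Perm.ofSubtype σ, fun b hb => ?_, fun a ha => ?_⟩
  · rw [Equiv.Perm.ofSubtype_apply_of_mem σ hb]
    exact (σ _).2
  · rw [Equiv.Perm.ofSubtype_apply_of_mem σ (hft ha), hσ ⟨a, ha⟩]

namespace Multigraph

variable {G : Multigraph} {k : ℕ} {D : Set G.E} {c : G.E → ℕ}

theorem degree_le_maxDegree (v : G.V) : G.degree v ≤ G.maxDegree :=
  le_csSup (Set.finite_range _).bddAbove ⟨v, rfl⟩

theorem degreeOn_add_degreeOn_compl (D : Set G.E) (v : G.V) :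
    G.degreeOn D v + G.degreeOn Dᶜ v = G.degree v := by
  rw [degreeOn, degreeOn, degree, ← Set.ncard_union_eq]
  · congr 1
    ext e
    by_cases he : e ∈ D <;> simp [he]
  · rw [Set.disjoint_left]
    rintro e ⟨h1, -⟩ ⟨h2, -⟩
    exact h2 h1

theorem exists_isProperColoring_chromIndex : ∃ c, G.IsProperColoring G.chromIndex c := by
  refine Nat.sInf_mem (s := {k | ∃ c, G.IsProperColoringOn k Set.univ c})
    ⟨Fintype.card G.E, fun e => Fintype.equivFin G.E e + 1, fun e _ => ?_, ?_⟩
  · exact ⟨Nat.le_add_left 1 _, (Fintype.equivFin G.E e).2⟩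
  · intro e _ f _ hef _ h
    exact hef ((Fintype.equivFin G.E).injective (Fin.ext (by simpa using h)))

theorem IsMatching.ncard_verts {M : Set G.E} (hM : G.IsMatching M) :
    {v | ∃ e ∈ M, v ∈ G.ends e}.ncard = 2 * M.ncard := by
  classical
  have hverts : {v | ∃ e ∈ M, v ∈ G.ends e} =
      ↑(M.toFinset.biUnion fun e => (G.ends e).toFinset) := by
    ext v
    simp
  rw [hverts, Set.ncard_coe_finset, Finset.card_biUnion,
    Finset.sum_congr rfl fun e _ => Sym2.card_toFinset_of_not_isDiag _ (G.loopless e),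
    Finset.sum_const, smul_eq_mul, Set.ncard_eq_toFinset_card', mul_comm]
  intro e he f hf hef
  simp only [Function.onFun, Finset.disjoint_left, Sym2.mem_toFinset]
  exact fun v hve => hM e (by simpa using he) f (by simpa using hf) hef v hve

theorem IsMatching.two_mul_ncard_le {M : Set G.E} (hM : G.IsMatching M) {X : Set G.V}
    (hX : ∀ e ∈ M, ∀ v ∈ G.ends e, v ∈ X) : 2 * M.ncard ≤ X.ncard :=
  hM.ncard_verts ▸ Set.ncard_le_ncard fun _ ⟨e, he, hv⟩ => hX e he _ hv

theorem IsProperColoringOn.mono {D' : Set G.E} (hc : G.IsProperColoringOn k D c)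
    (hD' : D' ⊆ D) : G.IsProperColoringOn k D' c :=
  ⟨fun e he => hc.1 e (hD' he), fun e he f hf => hc.2 e (hD' he) f (hD' hf)⟩

theorem IsProperColoringOn.isMatching (hc : G.IsProperColoringOn k D c) (i : ℕ) :
    G.IsMatching {e | e ∈ D ∧ c e = i} := by
  rintro e ⟨he, rfl⟩ f ⟨hf, hfi⟩ hef v hve hvf
  exact hc.2 e he f hf hef ⟨v, hve, hvf⟩ hfi.symm

theorem IsProperColoringOn.ncard_eq_sum (hc : G.IsProperColoringOn k D c) :
    D.ncard = ∑ i ∈ Finset.Icc 1 k, {e | e ∈ D ∧ c e = i}.ncard := by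
  classical
  rw [Set.ncard_eq_toFinset_card', Finset.card_eq_sum_card_fiberwise (f := c)
    (t := Finset.Icc 1 k) fun e he => by simpa using hc.1 e (by simpa using he)]
  refine Finset.sum_congr rfl fun i _ => ?_
  rw [Set.ncard_eq_toFinset_card']
  congr 1
  ext e
  simp

theorem IsProperColoringOn.ncard_le {X : Set G.V} {m : ℕ} (hc : G.IsProperColoringOn k D c)
    (hX : X.ncard = 2 * m + 1) (hD : ∀ e ∈ D, ∀ v ∈ G.ends e, v ∈ X) : D.ncard ≤ k * m := by
  rw [hc.ncard_eq_sum]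
  calc ∑ i ∈ Finset.Icc 1 k, {e | e ∈ D ∧ c e = i}.ncard
      ≤ ∑ _i ∈ Finset.Icc 1 k, m := Finset.sum_le_sum fun i _ => by
        have := (hc.isMatching i).two_mul_ncard_le fun e he => hD e he.1
        omega
    _ = k * m := by simp

theorem IsProperColoringOn.ncard_missingOn (hc : G.IsProperColoringOn k D c) (v : G.V) :
    (G.missingOn k D c v).ncard = k - G.degreeOn D v := by
  have hmissing : G.missingOn k D c v = Set.Icc 1 k \ c '' {e | e ∈ D ∧ v ∈ G.ends e} := by
    ext i
    simp only [missingOn, Set.mem_ofPred_eq, Set.mem_sdiff, Set.mem_image, not_exists, not_and]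
    exact and_congr_right fun _ => ⟨fun h e he hi => h e he.1 he.2 hi,
      fun h e he hv => h e ⟨he, hv⟩⟩
  have hinj : Set.InjOn c {e | e ∈ D ∧ v ∈ G.ends e} := fun e ⟨he, hev⟩ f ⟨hf, hfv⟩ h =>
    by_contra fun hef => hc.2 e he f hf hef ⟨v, hev, hfv⟩ h
  rw [hmissing, Set.ncard_sdiff (by rintro i ⟨e, he, rfl⟩; exact hc.1 e he.1), Set.ncard_Icc_nat,
    hinj.ncard_image, degreeOn, Nat.add_sub_cancel]

theorem IsProperColoringOn.comp {π : ℕ → ℕ} (hc : G.IsProperColoringOn k D c)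
    (hπ : Set.MapsTo π (Set.Icc 1 k) (Set.Icc 1 k)) (hinj : Set.InjOn π (Set.Icc 1 k)) :
    G.IsProperColoringOn k D (π ∘ c) :=
  ⟨fun e he => hπ (hc.1 e he), fun e he f hf hef hadj h =>
    hc.2 e he f hf hef hadj (hinj (hc.1 e he) (hc.1 f hf) h)⟩

theorem IsProperColoringOn.piecewise [DecidablePred (· ∈ D)] {c' : G.E → ℕ}
    (hc : G.IsProperColoringOn k D c) (hc' : G.IsProperColoringOn k Dᶜ c')
    (hcross : ∀ e ∈ D, ∀ f ∉ D, (∃ v, v ∈ G.ends e ∧ v ∈ G.ends f) → c e ≠ c' f) :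
    G.IsProperColoring k (D.piecewise c c') := by
  refine ⟨fun e _ => ?_, fun e _ f _ hef hadj => ?_⟩
  · by_cases he : e ∈ D
    · rw [Set.piecewise_eq_of_mem _ _ _ he]
      exact hc.1 e he
    · rw [Set.piecewise_eq_of_notMem _ _ _ he]
      exact hc'.1 e he
  by_cases he : e ∈ D <;> by_cases hf : f ∈ D <;>
    simp only [Set.piecewise_eq_of_mem, Set.piecewise_eq_of_notMem, he, hf, not_false_eq_true]
  · exact hc.2 e he f hf hef hadj
  · exact hcross e he f hf hadj
  · obtain ⟨v, hve, hvf⟩ := hadj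
    exact (hcross f hf e he ⟨v, hvf, hve⟩).symm
  · exact hc'.2 e he f hf hef hadj

theorem eq_of_mem_boundary {X : Set G.V} {e : G.E} (he : e ∈ G.boundary X) {u v : G.V}
    (hu : u ∈ G.ends e) (hv : v ∈ G.ends e) (huX : u ∈ X) (hvX : v ∈ X) : u = v := by
  by_contra huv
  obtain ⟨-, w, hw, hwX⟩ := he
  rw [(Sym2.mem_and_mem_iff huv).1 ⟨hu, hv⟩, Sym2.mem_iff] at hw
  rcases hw with rfl | rfl <;> contradiction

theorem Subgraph.notMem_edges_of_mem_boundary (H : G.Subgraph) {e : G.E}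
    (he : e ∈ G.boundary H.verts) : e ∉ H.edges := fun heH => by
  obtain ⟨-, w, hw, hwX⟩ := he
  exact hwX (H.support e heH w hw)

namespace IsDense

variable {H : G.Subgraph} {ψ : G.E → ℕ}

theorem exists_ncard_eq (hH : G.IsDense k H) :
    ∃ m, H.verts.ncard = 2 * m + 1 ∧ H.edges.ncard = k * m := by
  obtain ⟨⟨m, hm⟩, hE⟩ := hH
  refine ⟨m, hm, ?_⟩
  rw [hm, Nat.add_sub_cancel] at hE
  linarith

theorem mem_boundary (hH : G.IsDense k H) (hc : G.IsProperColoring k c) {e : G.E}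
    (he : e ∉ H.edges) {v : G.V} (hv : v ∈ G.ends e) (hvX : v ∈ H.verts) :
    e ∈ G.boundary H.verts := by
  refine ⟨⟨v, hv, hvX⟩, ?_⟩
  by_contra! hinside
  obtain ⟨m, hX, hE⟩ := hH.exists_ncard_eq
  set I := {f : G.E | ∀ w ∈ G.ends f, w ∈ H.verts}
  have hI : I.ncard ≤ H.edges.ncard :=
    hE ▸ (hc.mono (Set.subset_univ I)).ncard_le hX fun _ hf => hf
  exact he ((Set.eq_of_subset_of_ncard_le (fun f hf => H.support f hf) hI).symm ▸ hinside)

theorem isElementaryOn (hH : G.IsDense k H) (hψ : G.IsProperColoringOn k H.edges ψ) :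
    G.IsElementaryOn k H.edges ψ H.verts := by
  obtain ⟨m, hX, hE⟩ := hH.exists_ncard_eq
  have hle : ∀ i, {e | e ∈ H.edges ∧ ψ e = i}.ncard ≤ m := fun i => by
    have := (hψ.isMatching i).two_mul_ncard_le fun e he => H.support e he.1
    omega
  have hclass : ∀ i ∈ Finset.Icc 1 k, {e | e ∈ H.edges ∧ ψ e = i}.ncard = m := by
    refine (Finset.sum_eq_sum_iff_of_le fun i _ => hle i).1 ?_
    rw [← hψ.ncard_eq_sum, hE]
    simp
  rintro u hu v hv huv
  ext i
  simp only [Set.mem_inter_iff, Set.mem_empty_iff_false, iff_false, not_and]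
  rintro ⟨hi, hiu⟩ ⟨-, hiv⟩
  have hcovered : {w | ∃ e ∈ {e | e ∈ H.edges ∧ ψ e = i}, w ∈ G.ends e} ⊆ H.verts \ {u, v} := by
    rintro w ⟨e, ⟨he, rfl⟩, hw⟩
    refine ⟨H.support e he w hw, ?_⟩
    rintro (rfl | rfl)
    exacts [hiu e he hw rfl, hiv e he hw rfl]
  have hpair := Set.ncard_le_ncard (Set.pair_subset hu hv)
  have hcount := Set.ncard_le_ncard hcovered
  rw [Set.ncard_pair huv] at hpair
  rw [(hψ.isMatching i).ncard_verts, hclass i (by simpa using hi),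
    Set.ncard_sdiff (Set.pair_subset hu hv), Set.ncard_pair huv, hX] at hcount
  omega

theorem exists_injOn_boundary_missingOn (hΔ : G.maxDegree ≤ k) (hH : G.IsDense k H)
    (hψ : G.IsProperColoringOn k H.edges ψ) :
    ∃ F : G.E → ℕ, Set.InjOn F (G.boundary H.verts) ∧ ∀ e ∈ G.boundary H.verts,
      ∀ v ∈ G.ends e, v ∈ H.verts → F e ∈ G.missingOn k H.edges ψ v := by
  set B : G.V → Set G.E := fun v => {e | e ∈ G.boundary H.verts ∧ v ∈ G.ends e}
  have hcover : G.boundary H.verts ⊆ ⋃ v ∈ H.verts, B v := fun e he => by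
    obtain ⟨v, hv, hvX⟩ := he.1
    exact Set.mem_biUnion hvX ⟨he, hv⟩
  have hBdisj : H.verts.PairwiseDisjoint B := fun u hu v hv huv =>
    Set.disjoint_left.2 fun e ⟨he, heu⟩ ⟨_, hev⟩ => huv (eq_of_mem_boundary he heu hev hu hv)
  have hMdisj : H.verts.PairwiseDisjoint (G.missingOn k H.edges ψ) := fun u hu v hv huv =>
    Set.disjoint_iff_inter_eq_empty.2 (hH.isElementaryOn hψ u hu v hv huv)
  have hle : ∀ v ∈ H.verts, (B v).encard ≤ (G.missingOn k H.edges ψ v).encard := by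
    intro v _
    rw [← (B v).toFinite.cast_ncard_eq,
      ← ((Set.finite_Icc 1 k).subset fun _ hi => hi.1).cast_ncard_eq, Nat.cast_le,
      hψ.ncard_missingOn]
    calc (B v).ncard ≤ G.degreeOn H.edgesᶜ v :=
          Set.ncard_le_ncard fun e ⟨he, hv⟩ => ⟨H.notMem_edges_of_mem_boundary he, hv⟩
      _ ≤ k - G.degreeOn H.edges v := by
          have := degreeOn_add_degreeOn_compl H.edges v
          have := degree_le_maxDegree v
          omega
  obtain ⟨F, hinj, hmaps⟩ := Set.exists_injOn_biUnion_of_encard_le hBdisj hMdisj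
    (fun _ _ => Set.toFinite _) hle
  exact ⟨F, hinj.mono hcover, fun e he v hv hvX => hmaps v hvX ⟨he, hv⟩⟩

end IsDense

end Multigraph

/-- **Lemma 2.5(a).** Let `χ'(G) = k ≥ Δ(G)` and let `H` be a `k`-dense subgraph of `G`.
Let `ψ` be a `k`-edge-coloring of `H` and `φ` a `k`-edge-coloring of `G - E(H)` such that the
colors on the edges of `∂_G(H)` are pairwise distinct under `φ`. Then by renaming the color
classes of `ψ` on `E(H)` (i.e. applying a permutation of the palette), one obtains a proper
`k`-edge-coloring of `G` agreeing with `φ` off `E(H)`. -/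
theorem combine_colorings (G : Multigraph) (k : ℕ)
    (hχ : G.chromIndex = k) (hΔ : G.maxDegree ≤ k)
    (H : G.Subgraph) (hH : G.IsDense k H)
    (ψ φ : G.E → ℕ)
    (hψ : G.IsProperColoringOn k H.edges ψ)
    (hφ : G.IsProperColoringOn k H.edgesᶜ φ)
    (hb : ∀ e ∈ G.boundary H.verts, ∀ f ∈ G.boundary H.verts, e ≠ f → φ e ≠ φ f) :
    ∃ (π : Equiv.Perm ℕ) (c : G.E → ℕ),
      (∀ i ∈ Set.Icc 1 k, π i ∈ Set.Icc 1 k) ∧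
      (∀ e ∈ H.edges, c e = π (ψ e)) ∧
      (∀ e ∉ H.edges, c e = φ e) ∧
      G.IsProperColoring k c := by
  classical
  obtain ⟨c₀, hc₀⟩ : ∃ c, G.IsProperColoring k c :=
    hχ ▸ Multigraph.exists_isProperColoring_chromIndex
  obtain ⟨F, hFinj, hFmissing⟩ := hH.exists_injOn_boundary_missingOn hΔ hψ
  have hφinj : Set.InjOn φ (G.boundary H.verts) := fun e he f hf h =>
    by_contra fun hef => hb e he f hf hef h
  obtain ⟨π, hπ, hπF⟩ := hFinj.exists_perm_mapsTo (Set.toFinite _) hφinj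
    (fun e he => by
      obtain ⟨v, hv, hvX⟩ := he.1
      exact (hFmissing e he v hv hvX).1)
    (fun e he => hφ.1 e (H.notMem_edges_of_mem_boundary he))
  refine ⟨π, H.edges.piecewise (π ∘ ψ) φ, fun i hi => hπ hi,
    fun e he => Set.piecewise_eq_of_mem _ _ _ he, fun e he => Set.piecewise_eq_of_notMem _ _ _ he,
    (hψ.comp hπ π.injective.injOn).piecewise hφ ?_⟩
  rintro e he f hf ⟨v, hve, hvf⟩ hef
  have hvX := H.support e he v hve
  have hfb := hH.mem_boundary hc₀ hf hvf hvX
  exact (hFmissing f hfb v hvf hvX).2 e he hve (π.injective (hef.trans (hπF f hfb).symm))
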